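/- arXiv:1606.01484 — 4 statements merged into one kernel-verified Lean document; each statement's English description precedes it below -/
import Mathlib

section
/- (Monotonicity of the EM algorithm) If θ' maximizes the Q-function Q(θ; θ₀) = ∫ p(x|y; θ₀) log p(y, x; θ) dx over θ, i.e. Q(θ'; θ₀) ≥ Q(θ₀; θ₀), then the log-likelihood does not decrease: log p(y; θ') ≥ log p(y; θ₀). -/
/-!
The Q-function differs from the log-likelihood by a Gibbs-type term: by `log t ≤ t - 1`,
`p₀ (log p' - log p₀) ≤ p' - p₀` pointwise, so integrating gives
`L θ₀ (Q θ' θ₀ - Q θ₀ θ₀) ≤ L θ' - L θ₀`. Hence an increase of `Q` forces `L θ₀ ≤ L θ'`.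
-/

open MeasureTheory

theorem Real.mul_log_sub_log_le_sub {a b : ℝ} (ha : 0 < a) (hb : 0 < b) :
    a * (Real.log b - Real.log a) ≤ b - a := by
  have hlog : Real.log b - Real.log a ≤ b / a - 1 := by
    rw [← Real.log_div hb.ne' ha.ne']
    exact Real.log_le_sub_one_of_pos (div_pos hb ha)
  calc a * (Real.log b - Real.log a) ≤ a * (b / a - 1) := mul_le_mul_of_nonneg_left hlog ha.le
    _ = b - a := by field_simp

theorem MeasureTheory.integral_mul_log_sub_integral_mul_log_le {α : Type*} [MeasurableSpace α]
    {μ : Measure α} {f g : α → ℝ} (hf : ∀ᵐ x ∂μ, 0 < f x) (hg : ∀ᵐ x ∂μ, 0 < g x)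
    (hfi : Integrable f μ) (hgi : Integrable g μ)
    (hfg : Integrable (fun x => f x * Real.log (g x)) μ)
    (hff : Integrable (fun x => f x * Real.log (f x)) μ) :
    ∫ x, f x * Real.log (g x) ∂μ - ∫ x, f x * Real.log (f x) ∂μ ≤ ∫ x, g x ∂μ - ∫ x, f x ∂μ := by
  rw [← integral_sub hfg hff, ← integral_sub hgi hfi]
  refine integral_mono_ae (hfg.sub hff) (hgi.sub hfi) ?_
  filter_upwards [hf, hg] with x hfx hgx
  rw [← mul_sub]
  exact Real.mul_log_sub_log_le_sub hfx hgx

theorem em_monotone_general {α Θ : Type*} [MeasurableSpace α] (μ : Measure α)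
    (p : Θ → α → ℝ) (θ₀ θ' : Θ)
    (hpos : ∀ θ, ∀ᵐ x ∂μ, 0 < p θ x)
    (hpInt : ∀ θ, Integrable (p θ) μ)
    (L : Θ → ℝ) (hL : ∀ θ, L θ = ∫ x, p θ x ∂μ)
    (hLpos : ∀ θ, 0 < L θ)
    (Q : Θ → Θ → ℝ)
    (hQ : ∀ θ θ₁, Q θ θ₁ = ∫ x, (p θ₁ x / L θ₁) * Real.log (p θ x) ∂μ)
    (hQInt : ∀ θ θ₁, Integrable (fun x => (p θ₁ x / L θ₁) * Real.log (p θ x)) μ)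
    (hM : Q θ₀ θ₀ ≤ Q θ' θ₀) :
    Real.log (L θ₀) ≤ Real.log (L θ') := by
  have hL₀ := hLpos θ₀
  have hQ_eq : ∀ θ, Q θ θ₀ = (∫ x, p θ₀ x * Real.log (p θ x) ∂μ) / L θ₀ := by
    intro θ
    simp_rw [hQ, div_mul_eq_mul_div, integral_div]
  have hInt : ∀ θ, Integrable (fun x => p θ₀ x * Real.log (p θ x)) μ := by
    intro θ
    convert (hQInt θ θ₀).mul_const (L θ₀) using 2 with x
    field_simp
  have hcross : ∫ x, p θ₀ x * Real.log (p θ₀ x) ∂μ ≤ ∫ x, p θ₀ x * Real.log (p θ' x) ∂μ := by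
    rwa [hQ_eq, hQ_eq, div_le_div_iff_of_pos_right hL₀] at hM
  have hgibbs := integral_mul_log_sub_integral_mul_log_le (hpos θ₀) (hpos θ') (hpInt θ₀)
    (hpInt θ') (hInt θ') (hInt θ₀)
  refine Real.log_le_log hL₀ ?_
  rw [hL θ₀, hL θ']
  linarith

/-- Monotonicity of the EM algorithm: if `θ'` does not decrease the `Q`-function
relative to `θ₀`, then the log-likelihood does not decrease. -/
theorem em_monotone {α Θ : Type*} [MeasurableSpace α] (μ : Measure α)
    (p : Θ → α → ℝ) (θ₀ θ' : Θ)
    (hpm : ∀ θ, Measurable (p θ))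
    (hpos : ∀ θ, ∀ᵐ x ∂μ, 0 < p θ x)
    (hpInt : ∀ θ, Integrable (p θ) μ)
    (L : Θ → ℝ) (hL : ∀ θ, L θ = ∫ x, p θ x ∂μ)
    (hLpos : ∀ θ, 0 < L θ)
    (Q : Θ → Θ → ℝ)
    (hQ : ∀ θ θ₁, Q θ θ₁ = ∫ x, (p θ₁ x / L θ₁) * Real.log (p θ x) ∂μ)
    (hQInt : ∀ θ θ₁, Integrable (fun x => (p θ₁ x / L θ₁) * Real.log (p θ x)) μ)
    (hM : Q θ₀ θ₀ ≤ Q θ' θ₀) :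
    Real.log (L θ₀) ≤ Real.log (L θ') :=
  em_monotone_general μ p θ₀ θ' hpos hpInt L hL hLpos Q hQ hQInt hM
end

section
/- (Monotonicity of the annealed free energy, Theorem 1 of the paper, classical form) Let F_β(θ) = −(1/β) log ∫ p(x; θ)^β dx with f_θ(x) = p(x; θ)^β / ∫ p(x'; θ)^β dx', and let U_β(θ; θ₀) = −∫ f_{θ₀}(x) log p(x; θ) dx. If θ₁ minimizes U_β(·; θ₀), i.e. U_β(θ₁; θ₀) ≤ U_β(θ₀; θ₀), then F_β(θ₁) ≤ F_β(θ₀). -/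
/-!
Normalising `p(·; θ₁)^β` gives a probability density `f_{θ₁}`, and Gibbs' inequality
`∫ f log (g / f) ≤ ∫ g - ∫ f = 0` (from `log t ≤ t - 1`) applied to `f = f_{θ₀}`, `g = f_{θ₁}`
expands to `log Z(θ₀) - log Z(θ₁) ≤ β (U(θ₁; θ₀) - U(θ₀; θ₀))`. The M-step makes the right side
nonpositive, so `Z` does not decrease and `F = -(1/β) log Z` does not increase.
-/

open MeasureTheory Real

lemma Real.mul_log_div_le_sub {a b : ℝ} (ha : 0 < a) (hb : 0 < b) :
    a * log (b / a) ≤ b - a := by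
  have h := mul_le_mul_of_nonneg_left (log_le_sub_one_of_pos (div_pos hb ha)) ha.le
  rwa [mul_sub, mul_div_cancel₀ b ha.ne', mul_one] at h

section Gibbs

variable {α : Type*} [MeasurableSpace α] {μ : Measure α}

theorem integral_mul_log_div_le_integral_sub {f g : α → ℝ} (hf : Integrable f μ)
    (hg : Integrable g μ) (hfg : Integrable (fun x => f x * log (g x / f x)) μ)
    (hf_pos : ∀ᵐ x ∂μ, 0 < f x) (hg_pos : ∀ᵐ x ∂μ, 0 < g x) :
    ∫ x, f x * log (g x / f x) ∂μ ≤ ∫ x, g x ∂μ - ∫ x, f x ∂μ := by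
  rw [← integral_sub hg hf]
  refine integral_mono_ae hfg (hg.sub hf) ?_
  filter_upwards [hf_pos, hg_pos] with x hfx hgx
  exact mul_log_div_le_sub hfx hgx

variable (μ) in
noncomputable def gibbsDensity (β : ℝ) (p : α → ℝ) (x : α) : ℝ :=
  p x ^ β / ∫ y, p y ^ β ∂μ

variable {β : ℝ} {p q : α → ℝ}

lemma integral_gibbsDensity (hZ : ∫ x, p x ^ β ∂μ ≠ 0) :
    ∫ x, gibbsDensity μ β p x ∂μ = 1 := by
  simp only [gibbsDensity, integral_div, div_self hZ]

lemma integrable_gibbsDensity (hZ : ∫ x, p x ^ β ∂μ ≠ 0) :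
    Integrable (gibbsDensity μ β p) μ :=
  (Integrable.of_integral_ne_zero hZ).div_const _

lemma gibbsDensity_pos {x : α} (hp : 0 < p x) (hZ : 0 < ∫ x, p x ^ β ∂μ) :
    0 < gibbsDensity μ β p x :=
  div_pos (rpow_pos_of_pos hp β) hZ

lemma log_gibbsDensity {x : α} (hp : 0 < p x) (hZ : 0 < ∫ x, p x ^ β ∂μ) :
    log (gibbsDensity μ β p x) = β * log (p x) - log (∫ x, p x ^ β ∂μ) := by
  rw [gibbsDensity, log_div (rpow_pos_of_pos hp β).ne' hZ.ne', log_rpow hp]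

theorem log_integral_rpow_add_le (hp : ∀ᵐ x ∂μ, 0 < p x) (hq : ∀ᵐ x ∂μ, 0 < q x)
    (hZp : 0 < ∫ x, p x ^ β ∂μ) (hZq : 0 < ∫ x, q x ^ β ∂μ)
    (hp_log : Integrable (fun x => gibbsDensity μ β p x * log (p x)) μ)
    (hq_log : Integrable (fun x => gibbsDensity μ β p x * log (q x)) μ) :
    log (∫ x, p x ^ β ∂μ) + β * ∫ x, gibbsDensity μ β p x * log (q x) ∂μ
      ≤ log (∫ x, q x ^ β ∂μ) + β * ∫ x, gibbsDensity μ β p x * log (p x) ∂μ := by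
  set c := log (∫ x, p x ^ β ∂μ) - log (∫ x, q x ^ β ∂μ)
  have hfp := integrable_gibbsDensity hZp.ne'
  have hsplit : (fun x => gibbsDensity μ β p x * log (gibbsDensity μ β q x / gibbsDensity μ β p x))
      =ᵐ[μ] fun x => β * (gibbsDensity μ β p x * log (q x))
        - β * (gibbsDensity μ β p x * log (p x)) + c * gibbsDensity μ β p x := by
    filter_upwards [hp, hq] with x hpx hqx
    rw [log_div (gibbsDensity_pos hqx hZq).ne' (gibbsDensity_pos hpx hZp).ne',
      log_gibbsDensity hpx hZp, log_gibbsDensity hqx hZq]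
    ring
  have hA := hq_log.const_mul β
  have hB := hp_log.const_mul β
  have hAB : Integrable (fun x => β * (gibbsDensity μ β p x * log (q x))
      - β * (gibbsDensity μ β p x * log (p x))) μ := hA.sub hB
  have hC := hfp.const_mul c
  have gibbs := integral_mul_log_div_le_integral_sub hfp (integrable_gibbsDensity hZq.ne')
    ((hAB.add hC).congr hsplit.symm) (hp.mono fun x hx => gibbsDensity_pos hx hZp)
    (hq.mono fun x hx => gibbsDensity_pos hx hZq)
  rw [integral_congr_ae hsplit, integral_add hAB hC, integral_sub hA hB,
    integral_const_mul, integral_const_mul, integral_const_mul, integral_gibbsDensity hZp.ne',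
    integral_gibbsDensity hZq.ne'] at gibbs
  linarith

end Gibbs

theorem annealed_free_energy_monotone_general {α Θ : Type*} [MeasurableSpace α] (μ : Measure α)
    (p : Θ → α → ℝ) (β : ℝ) (hβ : 0 < β)
    (hpos : ∀ θ, ∀ᵐ x ∂μ, 0 < p θ x)
    (Z : Θ → ℝ) (hZ : ∀ θ, Z θ = ∫ x, p θ x ^ β ∂μ)
    (hZpos : ∀ θ, 0 < Z θ)
    (f : Θ → α → ℝ) (hf : ∀ θ x, f θ x = p θ x ^ β / Z θ)
    (F : Θ → ℝ) (hF : ∀ θ, F θ = -(1 / β) * Real.log (Z θ))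
    (U : Θ → Θ → ℝ)
    (hU : ∀ θ θ', U θ θ' = -∫ x, f θ' x * Real.log (p θ x) ∂μ)
    (hUInt : ∀ θ θ', Integrable (fun x => f θ' x * Real.log (p θ x)) μ)
    (θ₀ θ₁ : Θ)
    (hM : U θ₁ θ₀ ≤ U θ₀ θ₀) :
    F θ₁ ≤ F θ₀ := by
  have hf_gibbs : f θ₀ = gibbsDensity μ β (p θ₀) := funext fun x => by
    rw [hf, hZ, gibbsDensity]
  have hZ₀ : 0 < ∫ x, p θ₀ x ^ β ∂μ := hZ θ₀ ▸ hZpos θ₀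
  have hZ₁ : 0 < ∫ x, p θ₁ x ^ β ∂μ := hZ θ₁ ▸ hZpos θ₁
  have variational := log_integral_rpow_add_le (hpos θ₀) (hpos θ₁) hZ₀ hZ₁
    (hf_gibbs ▸ hUInt θ₀ θ₀) (hf_gibbs ▸ hUInt θ₁ θ₀)
  rw [← hZ, ← hZ, ← hf_gibbs] at variational
  have hlogZ : log (Z θ₀) ≤ log (Z θ₁) := by
    rw [hU, hU] at hM
    linarith [mul_le_mul_of_nonneg_left hM hβ.le]
  rw [hF, hF]
  exact mul_le_mul_of_nonpos_left hlogZ (neg_nonpos.mpr (one_div_pos.mpr hβ).le)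

/-- Monotonicity of the annealed free energy (Theorem 1, classical `Γ = 0` form):
if `θ₁` minimizes `U_β(·; θ₀)`, then `F_β(θ₁) ≤ F_β(θ₀)`. -/
theorem annealed_free_energy_monotone {α Θ : Type*} [MeasurableSpace α] (μ : Measure α)
    (p : Θ → α → ℝ) (β : ℝ) (hβ : 0 < β)
    (hpm : ∀ θ, Measurable (p θ))
    (hpos : ∀ θ, ∀ᵐ x ∂μ, 0 < p θ x)
    (Z : Θ → ℝ) (hZ : ∀ θ, Z θ = ∫ x, p θ x ^ β ∂μ)
    (hZpos : ∀ θ, 0 < Z θ)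
    (hZInt : ∀ θ, Integrable (fun x => p θ x ^ β) μ)
    (f : Θ → α → ℝ) (hf : ∀ θ x, f θ x = p θ x ^ β / Z θ)
    (F : Θ → ℝ) (hF : ∀ θ, F θ = -(1 / β) * Real.log (Z θ))
    (U : Θ → Θ → ℝ)
    (hU : ∀ θ θ', U θ θ' = -∫ x, f θ' x * Real.log (p θ x) ∂μ)
    (hUInt : ∀ θ θ', Integrable (fun x => f θ' x * Real.log (p θ x)) μ)
    (θ₀ θ₁ : Θ)
    (hM : U θ₁ θ₀ ≤ U θ₀ θ₀) :
    F θ₁ ≤ F θ₀ :=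
  annealed_free_energy_monotone_general μ p β hβ hpos Z hZ hZpos f hf F hF U hU hUInt θ₀ θ₁ hM
end

section
/- (Strict decrease criterion) With F_β, U_β, S_β as in the free energy decomposition, if θ₁ minimizes U_β(·; θ₀) then F_β(θ₀) − F_β(θ₁) = [U_β(θ₀;θ₀) − U_β(θ₁;θ₀)] + (1/β)·KL(f_{θ₀} ‖ f_{θ₁}) ≥ 0, and F_β(θ₁) = F_β(θ₀) if and only if U_β(θ₁; θ₀) = U_β(θ₀; θ₀) and KL(f_{θ₀} ‖ f_{θ₁}) = 0. -/
/-!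
Writing `f_θ = p_θ^β / Z_θ`, the log-ratio `log (f_{θ₀} / f_{θ₁})` is `β (log p_{θ₀} − log p_{θ₁})`
plus the constant `log Z_{θ₁} − log Z_{θ₀} = β (F_{θ₀} − F_{θ₁})`. Integrating against the
probability density `f_{θ₀}` gives `KL(f_{θ₀} ‖ f_{θ₁}) = β (U(θ₁;θ₀) − U(θ₀;θ₀)) + β (F_{θ₀} − F_{θ₁})`,
which is the decomposition. Both of its summands are nonnegative, the first because `θ₁` minimizes
`U(·;θ₀)` and the second by Gibbs' inequality, so the free energies agree iff both vanish.
-/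

open MeasureTheory Real

lemma sub_le_mul_log_div {x y : ℝ} (hx : 0 < x) (hy : 0 < y) : x - y ≤ x * log (x / y) := by
  have h := one_sub_inv_le_log_of_pos (div_pos hx hy)
  rw [inv_div] at h
  calc x - y = x * (1 - y / x) := by field_simp
    _ ≤ x * log (x / y) := mul_le_mul_of_nonneg_left h hx.le

lemma log_rpow_div_div_rpow_div {a b β Z₀ Z₁ : ℝ} (ha : 0 < a) (hb : 0 < b) (hZ₀ : 0 < Z₀)
    (hZ₁ : 0 < Z₁) :
    log ((a ^ β / Z₀) / (b ^ β / Z₁)) = β * log a - β * log b + (log Z₁ - log Z₀) := by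
  have hfa : 0 < a ^ β / Z₀ := div_pos (rpow_pos_of_pos ha β) hZ₀
  have hfb : 0 < b ^ β / Z₁ := div_pos (rpow_pos_of_pos hb β) hZ₁
  rw [log_div hfa.ne' hfb.ne', log_div (rpow_pos_of_pos ha β).ne' hZ₀.ne',
    log_div (rpow_pos_of_pos hb β).ne' hZ₁.ne', log_rpow ha, log_rpow hb]
  ring

section

variable {α : Type*} [MeasurableSpace α] {μ : Measure α}

/-- A non-integrable integrand has Bochner integral `0`, so no integrability
assumption on it is needed. -/
theorem integral_mul_log_div_nonneg {f g : α → ℝ} (hf : ∀ᵐ x ∂μ, 0 < f x)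
    (hg : ∀ᵐ x ∂μ, 0 < g x) (hfi : Integrable f μ) (hgi : Integrable g μ)
    (hfg : ∫ x, g x ∂μ ≤ ∫ x, f x ∂μ) :
    0 ≤ ∫ x, f x * log (f x / g x) ∂μ := by
  by_cases hi : Integrable (fun x => f x * log (f x / g x)) μ
  · calc 0 ≤ ∫ x, (f x - g x) ∂μ := by rw [integral_sub hfi hgi]; linarith
      _ ≤ ∫ x, f x * log (f x / g x) ∂μ := by
        refine integral_mono_ae (hfi.sub hgi) hi ?_
        filter_upwards [hf, hg] with x using sub_le_mul_log_div
  · rw [integral_undef hi]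

theorem integral_mul_log_div_of_log_div_ae_eq {f₀ f₁ a b : α → ℝ} {β c : ℝ}
    (hf₀ : ∫ x, f₀ x ∂μ = 1) (hf₀i : Integrable f₀ μ)
    (ha : Integrable (fun x => f₀ x * a x) μ) (hb : Integrable (fun x => f₀ x * b x) μ)
    (h : ∀ᵐ x ∂μ, log (f₀ x / f₁ x) = β * a x - β * b x + c) :
    ∫ x, f₀ x * log (f₀ x / f₁ x) ∂μ
      = β * ∫ x, f₀ x * a x ∂μ - β * ∫ x, f₀ x * b x ∂μ + c := by
  have hexpand : ∀ᵐ x ∂μ, f₀ x * log (f₀ x / f₁ x)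
      = (β * (f₀ x * a x) - β * (f₀ x * b x)) + c * f₀ x := by
    filter_upwards [h] with x hx
    rw [hx]; ring
  have hdiff : Integrable (fun x => β * (f₀ x * a x) - β * (f₀ x * b x)) μ :=
    (ha.const_mul β).sub (hb.const_mul β)
  rw [integral_congr_ae hexpand, integral_add hdiff (hf₀i.const_mul c), integral_sub (ha.const_mul β) (hb.const_mul β), integral_const_mul,
    integral_const_mul, integral_const_mul, hf₀, mul_one]

end

theorem annealed_strict_decrease_general {α Θ : Type*} [MeasurableSpace α] (μ : Measure α)
    (p : Θ → α → ℝ) (β : ℝ) (hβ : 0 < β)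
    (hpos : ∀ θ, ∀ᵐ x ∂μ, 0 < p θ x)
    (Z : Θ → ℝ) (hZ : ∀ θ, Z θ = ∫ x, p θ x ^ β ∂μ)
    (hZpos : ∀ θ, 0 < Z θ)
    (hZInt : ∀ θ, Integrable (fun x => p θ x ^ β) μ)
    (f : Θ → α → ℝ) (hf : ∀ θ x, f θ x = p θ x ^ β / Z θ)
    (F : Θ → ℝ) (hF : ∀ θ, F θ = -(1 / β) * Real.log (Z θ))
    (U : Θ → Θ → ℝ)
    (hU : ∀ θ θ', U θ θ' = -∫ x, f θ' x * Real.log (p θ x) ∂μ)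
    (hUInt : ∀ θ θ', Integrable (fun x => f θ' x * Real.log (p θ x)) μ)
    (KL : Θ → Θ → ℝ)
    (hKL : ∀ θ θ', KL θ θ' = ∫ x, f θ x * Real.log (f θ x / f θ' x) ∂μ)
    (θ₀ θ₁ : Θ)
    (hM : ∀ θ, U θ₁ θ₀ ≤ U θ θ₀) :
    F θ₀ - F θ₁ = (U θ₀ θ₀ - U θ₁ θ₀) + (1 / β) * KL θ₀ θ₁ ∧
      0 ≤ F θ₀ - F θ₁ ∧
      (F θ₁ = F θ₀ ↔ (U θ₁ θ₀ = U θ₀ θ₀ ∧ KL θ₀ θ₁ = 0)) := by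
  have hfθ : ∀ θ, f θ = fun x => p θ x ^ β / Z θ := fun θ => funext (hf θ)
  have hfInt : ∀ θ, Integrable (f θ) μ := fun θ => by rw [hfθ]; exact (hZInt θ).div_const _
  have hfOne : ∀ θ, ∫ x, f θ x ∂μ = 1 := fun θ => by
    rw [hfθ, integral_div, ← hZ, div_self (hZpos θ).ne']
  have hfPos : ∀ θ, ∀ᵐ x ∂μ, 0 < f θ x := fun θ => by
    filter_upwards [hpos θ] with x hx
    rw [hf]; exact div_pos (rpow_pos_of_pos hx β) (hZpos θ)
  have hlogRatio : ∀ᵐ x ∂μ, log (f θ₀ x / f θ₁ x)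
      = β * log (p θ₀ x) - β * log (p θ₁ x) + (log (Z θ₁) - log (Z θ₀)) := by
    filter_upwards [hpos θ₀, hpos θ₁] with x h₀ h₁
    rw [hf, hf, log_rpow_div_div_rpow_div h₀ h₁ (hZpos θ₀) (hZpos θ₁)]
  have hKLval : KL θ₀ θ₁ = β * (U θ₁ θ₀ - U θ₀ θ₀) + (log (Z θ₁) - log (Z θ₀)) := by
    rw [hKL, hU, hU, integral_mul_log_div_of_log_div_ae_eq (hfOne θ₀) (hfInt θ₀) (hUInt θ₀ θ₀)
      (hUInt θ₁ θ₀) hlogRatio]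
    ring
  have hKLnn : 0 ≤ KL θ₀ θ₁ := hKL θ₀ θ₁ ▸ integral_mul_log_div_nonneg (hfPos θ₀) (hfPos θ₁)
    (hfInt θ₀) (hfInt θ₁) (by rw [hfOne, hfOne])
  have hdecomp : F θ₀ - F θ₁ = (U θ₀ θ₀ - U θ₁ θ₀) + (1 / β) * KL θ₀ θ₁ := by
    rw [hF, hF, hKLval]; field_simp; ring
  have hUgap : 0 ≤ U θ₀ θ₀ - U θ₁ θ₀ := sub_nonneg.mpr (hM θ₀)
  have hKLterm : 0 ≤ (1 / β) * KL θ₀ θ₁ := by positivity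
  refine ⟨hdecomp, hdecomp ▸ add_nonneg hUgap hKLterm, ?_⟩
  rw [eq_comm, ← sub_eq_zero, hdecomp, add_eq_zero_iff_of_nonneg hUgap hKLterm, sub_eq_zero,
    eq_comm, mul_eq_zero, or_iff_right (one_div_pos.mpr hβ).ne']

/-- Strict decrease criterion (equality case of Theorem 1): if `θ₁` minimizes
`U_β(·; θ₀)`, then `F_β(θ₀) − F_β(θ₁) = [U_β(θ₀;θ₀) − U_β(θ₁;θ₀)] + (1/β) KL(f_{θ₀}‖f_{θ₁}) ≥ 0`,
with equality of free energies iff both the `U` values agree and the KL divergence vanishes. -/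
theorem annealed_strict_decrease {α Θ : Type*} [MeasurableSpace α] (μ : Measure α)
    (p : Θ → α → ℝ) (β : ℝ) (hβ : 0 < β)
    (hpm : ∀ θ, Measurable (p θ))
    (hpos : ∀ θ, ∀ᵐ x ∂μ, 0 < p θ x)
    (Z : Θ → ℝ) (hZ : ∀ θ, Z θ = ∫ x, p θ x ^ β ∂μ)
    (hZpos : ∀ θ, 0 < Z θ)
    (hZInt : ∀ θ, Integrable (fun x => p θ x ^ β) μ)
    (f : Θ → α → ℝ) (hf : ∀ θ x, f θ x = p θ x ^ β / Z θ)
    (F : Θ → ℝ) (hF : ∀ θ, F θ = -(1 / β) * Real.log (Z θ))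
    (U : Θ → Θ → ℝ)
    (hU : ∀ θ θ', U θ θ' = -∫ x, f θ' x * Real.log (p θ x) ∂μ)
    (hUInt : ∀ θ θ', Integrable (fun x => f θ' x * Real.log (p θ x)) μ)
    (KL : Θ → Θ → ℝ)
    (hKL : ∀ θ θ', KL θ θ' = ∫ x, f θ x * Real.log (f θ x / f θ' x) ∂μ)
    (hKLInt : ∀ θ θ', Integrable (fun x => f θ x * Real.log (f θ x / f θ' x)) μ)
    (θ₀ θ₁ : Θ)
    (hM : ∀ θ, U θ₁ θ₀ ≤ U θ θ₀) :
    F θ₀ - F θ₁ = (U θ₀ θ₀ - U θ₁ θ₀) + (1 / β) * KL θ₀ θ₁ ∧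
      0 ≤ F θ₀ - F θ₁ ∧
      (F θ₁ = F θ₀ ↔ (U θ₁ θ₀ = U θ₀ θ₀ ∧ KL θ₀ θ₁ = 0)) :=
  annealed_strict_decrease_general μ p β hβ hpos Z hZ hZpos hZInt f hf F hF U hU hUInt KL hKL θ₀ θ₁
    hM
end

section
/- (Chain of inequalities for one full annealed EM step) Let θ₁ ∈ argmin_θ U_β(θ; θ₀). Then β F_β(θ₁) ≤ β U_β(θ₁;θ₀) − S_β(θ₀;θ₀) ≤ β U_β(θ₀;θ₀) − S_β(θ₀;θ₀) = β F_β(θ₀), where S_β(θ;θ₀) = −∫ f_{θ₀} log f_θ and F_β, U_β, f_θ are as before; in particular the first inequality is the variational bound F_β(θ) ≤ U_β(θ;θ₀) − (1/β) S_β(θ₀;θ₀) valid for all θ. -/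
open MeasureTheory

/-! The cross entropy of the annealed density `f_θ = p_θ^β / Z_θ` against `f_{θ₀}` splits
as `S(θ;θ₀) = β U(θ;θ₀) + log Z_θ = β U(θ;θ₀) - β F(θ)`, and Gibbs' inequality
`S(θ₀;θ₀) ≤ S(θ;θ₀)` (from `log x ≤ x - 1`) turns this into the variational bound
`β F(θ) ≤ β U(θ;θ₀) - S(θ₀;θ₀)`, with equality at `θ = θ₀`. Minimality of `θ₁` gives
the middle inequality. -/

namespace Real

lemma mul_log_le_mul_log_self_add_sub {a b : ℝ} (ha : 0 < a) (hb : 0 < b) :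
    b * log a ≤ b * log b + (a - b) := by
  have h := log_le_sub_one_of_pos (div_pos ha hb)
  rw [log_div ha.ne' hb.ne'] at h
  have h' := mul_le_mul_of_nonneg_left h hb.le
  have hab : b * (a / b - 1) = a - b := by field_simp
  linarith

lemma log_rpow_div {x Z : ℝ} (hx : 0 < x) (hZ : 0 < Z) (β : ℝ) :
    log (x ^ β / Z) = β * log x - log Z := by
  rw [log_div (rpow_pos_of_pos hx β).ne' hZ.ne', log_rpow hx]

end Real

open Real

section

variable {α : Type*} [MeasurableSpace α] {μ : Measure α}

theorem integral_mul_log_le_integral_mul_log_self {g h : α → ℝ}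
    (hg : Integrable g μ) (hh : Integrable h μ)
    (hg_pos : ∀ᵐ x ∂μ, 0 < g x) (hh_pos : ∀ᵐ x ∂μ, 0 < h x)
    (hmass : ∫ x, h x ∂μ ≤ ∫ x, g x ∂μ)
    (hgh : Integrable (fun x => g x * log (h x)) μ)
    (hgg : Integrable (fun x => g x * log (g x)) μ) :
    ∫ x, g x * log (h x) ∂μ ≤ ∫ x, g x * log (g x) ∂μ := by
  have hsub : Integrable (fun x => h x - g x) μ := hh.sub hg
  calc ∫ x, g x * log (h x) ∂μ
      ≤ ∫ x, (g x * log (g x) + (h x - g x)) ∂μ := by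
        refine integral_mono_ae hgh (hgg.add hsub) ?_
        filter_upwards [hg_pos, hh_pos] with x hgx hhx
        exact mul_log_le_mul_log_self_add_sub hhx hgx
    _ = ∫ x, g x * log (g x) ∂μ + (∫ x, h x ∂μ - ∫ x, g x ∂μ) := by
        rw [integral_add hgg hsub, integral_sub hh hg]
    _ ≤ ∫ x, g x * log (g x) ∂μ := by linarith

theorem integral_mul_log_rpow_div {q p : α → ℝ} (hq : Integrable q μ)
    (hp_pos : ∀ᵐ x ∂μ, 0 < p x) (hqp : Integrable (fun x => q x * log (p x)) μ)
    {Z : ℝ} (hZ : 0 < Z) (β : ℝ) :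
    ∫ x, q x * log (p x ^ β / Z) ∂μ
      = β * ∫ x, q x * log (p x) ∂μ - log Z * ∫ x, q x ∂μ := by
  have hae : (fun x => q x * log (p x ^ β / Z))
      =ᵐ[μ] fun x => β * (q x * log (p x)) - log Z * q x := by
    filter_upwards [hp_pos] with x hx
    rw [log_rpow_div hx hZ]
    ring
  rw [integral_congr_ae hae, integral_sub (hqp.const_mul β) (hq.const_mul (log Z)),
    integral_const_mul, integral_const_mul]

end

theorem annealed_em_chain_general {α Θ : Type*} [MeasurableSpace α] (μ : Measure α)
    (p : Θ → α → ℝ) (β : ℝ) (hβ : 0 < β)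
    (hpos : ∀ θ, ∀ᵐ x ∂μ, 0 < p θ x)
    (Z : Θ → ℝ) (hZ : ∀ θ, Z θ = ∫ x, p θ x ^ β ∂μ)
    (hZpos : ∀ θ, 0 < Z θ)
    (hZInt : ∀ θ, Integrable (fun x => p θ x ^ β) μ)
    (f : Θ → α → ℝ) (hf : ∀ θ x, f θ x = p θ x ^ β / Z θ)
    (F : Θ → ℝ) (hF : ∀ θ, F θ = -(1 / β) * Real.log (Z θ))
    (U : Θ → Θ → ℝ)
    (hU : ∀ θ θ', U θ θ' = -∫ x, f θ' x * Real.log (p θ x) ∂μ)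
    (hUInt : ∀ θ θ', Integrable (fun x => f θ' x * Real.log (p θ x)) μ)
    (S : Θ → Θ → ℝ)
    (hS : ∀ θ θ', S θ θ' = -∫ x, f θ' x * Real.log (f θ x) ∂μ)
    (hSInt : ∀ θ θ', Integrable (fun x => f θ' x * Real.log (f θ x)) μ)
    (θ₀ θ₁ : Θ)
    (hM : ∀ θ, U θ₁ θ₀ ≤ U θ θ₀) :
    β * F θ₁ ≤ β * U θ₁ θ₀ - S θ₀ θ₀ ∧
      β * U θ₁ θ₀ - S θ₀ θ₀ ≤ β * U θ₀ θ₀ - S θ₀ θ₀ ∧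
      β * U θ₀ θ₀ - S θ₀ θ₀ = β * F θ₀ ∧
      ∀ θ, F θ ≤ U θ θ₀ - (1 / β) * S θ₀ θ₀ := by
  have hf_eq θ : f θ = fun x => p θ x ^ β / Z θ := funext (hf θ)
  have hf_int θ : Integrable (f θ) μ := hf_eq θ ▸ (hZInt θ).div_const (Z θ)
  have hf_mass θ : ∫ x, f θ x ∂μ = 1 := by
    rw [hf_eq, integral_div, ← hZ, div_self (hZpos θ).ne']
  have hf_pos θ : ∀ᵐ x ∂μ, 0 < f θ x := by
    filter_upwards [hpos θ] with x hx
    exact hf θ x ▸ div_pos (rpow_pos_of_pos hx β) (hZpos θ)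
  have hβF θ : β * F θ = -log (Z θ) := by
    rw [hF]; field_simp
  have hS_eq θ : S θ θ₀ = β * U θ θ₀ + log (Z θ) := by
    rw [hS, hU, hf_eq θ,
      integral_mul_log_rpow_div (hf_int θ₀) (hpos θ) (hUInt θ θ₀) (hZpos θ), hf_mass]
    ring
  have hgibbs θ : S θ₀ θ₀ ≤ S θ θ₀ := by
    rw [hS, hS, neg_le_neg_iff]
    exact integral_mul_log_le_integral_mul_log_self (hf_int θ₀) (hf_int θ) (hf_pos θ₀)
      (hf_pos θ) (by rw [hf_mass, hf_mass]) (hSInt θ θ₀) (hSInt θ₀ θ₀)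
  have hvar θ : β * F θ ≤ β * U θ θ₀ - S θ₀ θ₀ := by
    linarith [hgibbs θ, hS_eq θ, hβF θ]
  refine ⟨hvar θ₁, sub_le_sub_right (mul_le_mul_of_nonneg_left (hM θ₀) hβ.le) _,
    by linarith [hS_eq θ₀, hβF θ₀], fun θ => ?_⟩
  rw [← mul_le_mul_iff_right₀ hβ, mul_sub, ← mul_assoc, mul_one_div_cancel hβ.ne', one_mul]
  exact hvar θ

/-- The full chain of inequalities for one annealed EM step: with `θ₁` a
minimizer of `U_β(·;θ₀)`,
`β F_β(θ₁) ≤ β U_β(θ₁;θ₀) − S_β(θ₀;θ₀) ≤ β U_β(θ₀;θ₀) − S_β(θ₀;θ₀) = β F_β(θ₀)`,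
and in general `F_β(θ) ≤ U_β(θ;θ₀) − (1/β) S_β(θ₀;θ₀)` for all `θ`. -/
theorem annealed_em_chain {α Θ : Type*} [MeasurableSpace α] (μ : Measure α)
    (p : Θ → α → ℝ) (β : ℝ) (hβ : 0 < β)
    (hpm : ∀ θ, Measurable (p θ))
    (hpos : ∀ θ, ∀ᵐ x ∂μ, 0 < p θ x)
    (Z : Θ → ℝ) (hZ : ∀ θ, Z θ = ∫ x, p θ x ^ β ∂μ)
    (hZpos : ∀ θ, 0 < Z θ)
    (hZInt : ∀ θ, Integrable (fun x => p θ x ^ β) μ)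
    (f : Θ → α → ℝ) (hf : ∀ θ x, f θ x = p θ x ^ β / Z θ)
    (F : Θ → ℝ) (hF : ∀ θ, F θ = -(1 / β) * Real.log (Z θ))
    (U : Θ → Θ → ℝ)
    (hU : ∀ θ θ', U θ θ' = -∫ x, f θ' x * Real.log (p θ x) ∂μ)
    (hUInt : ∀ θ θ', Integrable (fun x => f θ' x * Real.log (p θ x)) μ)
    (S : Θ → Θ → ℝ)
    (hS : ∀ θ θ', S θ θ' = -∫ x, f θ' x * Real.log (f θ x) ∂μ)
    (hSInt : ∀ θ θ', Integrable (fun x => f θ' x * Real.log (f θ x)) μ)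
    (θ₀ θ₁ : Θ)
    (hM : ∀ θ, U θ₁ θ₀ ≤ U θ θ₀) :
    β * F θ₁ ≤ β * U θ₁ θ₀ - S θ₀ θ₀ ∧
      β * U θ₁ θ₀ - S θ₀ θ₀ ≤ β * U θ₀ θ₀ - S θ₀ θ₀ ∧
      β * U θ₀ θ₀ - S θ₀ θ₀ = β * F θ₀ ∧
      ∀ θ, F θ ≤ U θ θ₀ - (1 / β) * S θ₀ θ₀ :=
  annealed_em_chain_general μ p β hβ hpos Z hZ hZpos hZInt f hf F hF U hU hUInt S hS hSInt θ₀ θ₁ hM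
end
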